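/- Let m ≥ 2, let a₁, …, a_m ≥ 0 and ε ≥ 0. Then clip[∑_{i=1}^m a_i | ε] ≤ 2 ∑_{i=1}^m clip[a_i | ε/(2m)], where clip[a | b] = a if a ≥ b and 0 otherwise. -/

import Mathlib

/-- The clipping operator: `clip a b = a` if `a ≥ b` and `0` otherwise. -/
noncomputable def clip (a b : ℝ) : ℝ := if b ≤ a then a else 0

/-
Clipping at level `t` loses at most `t` from each term, so `∑ aᵢ ≤ ∑ clip[aᵢ | t] + m t`.
With `t = ε / (2m)` the loss is at most `ε / 2`, which is at most half of `∑ aᵢ` whenever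
the left-hand side is not clipped to `0`.
-/

theorem clip_of_le {a b : ℝ} (h : b ≤ a) : clip a b = a := if_pos h

theorem clip_of_lt {a b : ℝ} (h : a < b) : clip a b = 0 := if_neg h.not_ge

theorem clip_nonneg {a b : ℝ} (hb : 0 ≤ b) : 0 ≤ clip a b := by
  rcases le_or_gt b a with h | h
  · rw [clip_of_le h]; exact hb.trans h
  · rw [clip_of_lt h]

theorem le_clip_add (a : ℝ) {b : ℝ} (hb : 0 ≤ b) : a ≤ clip a b + b := by
  rcases le_or_gt b a with h | h
  · rw [clip_of_le h]; linarith
  · rw [clip_of_lt h]; linarith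

theorem sum_le_sum_clip_add_card_mul {ι : Type*} (s : Finset ι) (f : ι → ℝ) {b : ℝ}
    (hb : 0 ≤ b) :
    ∑ i ∈ s, f i ≤ ∑ i ∈ s, clip (f i) b + s.card * b := by
  calc ∑ i ∈ s, f i ≤ ∑ i ∈ s, (clip (f i) b + b) := Finset.sum_le_sum fun i _ => le_clip_add _ hb
    _ = ∑ i ∈ s, clip (f i) b + s.card * b := by
      rw [Finset.sum_add_distrib, Finset.sum_const, nsmul_eq_mul]

theorem natCast_mul_div_two_mul_le {ε : ℝ} (hε : 0 ≤ ε) (m : ℕ) :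
    (m : ℝ) * (ε / (2 * m)) ≤ ε / 2 := by
  rcases m.eq_zero_or_pos with rfl | hm
  · simp only [Nat.cast_zero, zero_mul]; linarith
  · have hm' : (m : ℝ) ≠ 0 := by positivity
    exact le_of_eq (by field_simp)

theorem clip_sum_le_two_sum_clip_general (m : ℕ) (a : Fin m → ℝ) (ε : ℝ) (hε : 0 ≤ ε) :
    clip (∑ i, a i) ε ≤ 2 * ∑ i, clip (a i) (ε / (2 * m)) := by
  have ht : 0 ≤ ε / (2 * m) := by positivity
  have hclip : 0 ≤ ∑ i, clip (a i) (ε / (2 * m)) :=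
    Finset.sum_nonneg fun i _ => clip_nonneg ht
  rcases le_or_gt ε (∑ i, a i) with h | h
  · have hloss := sum_le_sum_clip_add_card_mul Finset.univ a ht
    rw [Finset.card_univ, Fintype.card_fin] at hloss
    have hbudget := natCast_mul_div_two_mul_le hε m
    rw [clip_of_le h]
    linarith
  · rw [clip_of_lt h]
    linarith

theorem clip_sum_le_two_sum_clip (m : ℕ) (hm : 2 ≤ m) (a : Fin m → ℝ)
    (ha : ∀ i, 0 ≤ a i) (ε : ℝ) (hε : 0 ≤ ε) :
    clip (∑ i, a i) ε ≤ 2 * ∑ i, clip (a i) (ε / (2 * m)) :=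
  clip_sum_le_two_sum_clip_general m a ε hε
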